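/- Masked self-attention f^m with parameters (A, V), defined by f^m(X)_i = f(x₁,…,x_i)_i, is Lipschitz on B_R^n with Lip(f^m|_{B_R^n}) ≤ √3 ‖V‖₂ (‖A‖₂² R⁴ (n + 1) + n)^{1/2}. -/

import Mathlib

open Matrix

/-- Masked self-attention: token `i` only attends to tokens `j ≤ i`. -/
noncomputable def maskedAttnF (n d k : ℕ) (A : Matrix (Fin d) (Fin d) ℝ)
    (V : Matrix (Fin k) (Fin d) ℝ) :
    PiLp 2 (fun _ : Fin n => EuclideanSpace ℝ (Fin d)) →
      PiLp 2 (fun _ : Fin n => EuclideanSpace ℝ (Fin k)) :=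
  fun x => WithLp.toLp 2 (fun i => WithLp.toLp 2 (V.mulVec (∑ j ∈ Finset.univ.filter (fun j => j ≤ i),
      (Real.exp ((x i) ⬝ᵥ (Aᵀ.mulVec (x j))) /
        ∑ l ∈ Finset.univ.filter (fun l => l ≤ i),
          Real.exp ((x i) ⬝ᵥ (Aᵀ.mulVec (x l)))) • (x j : Fin d → ℝ))))

/-- Spectral norm of a matrix. -/
noncomputable def spec {a b : ℕ} (M : Matrix (Fin a) (Fin b) ℝ) : ℝ :=
  ‖LinearMap.toContinuousLinearMap (Matrix.toEuclideanLin M)‖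

/-!
Row `i` of the output is `V` applied to the convex combination `∑ j ≤ i, p j • x j`, where `p` is
the softmax of the logits `x iᵀ Aᵀ x j`. Against `∑ j ≤ i, q j • y j` the difference splits into
`∑ (p j - q j) • x j`, of norm at most `R` times the `ℓ¹` distance of the weights, and
`∑ q j • (x j - y j)`, of norm at most `‖X - Y‖`. Softmax is `1`-Lipschitz from `ℓ^∞` to `ℓ¹`, and
each logit moves by at most `‖A‖ R (‖X - Y‖ + ‖x i - y i‖)`. Squaring with
`(u + v + w)² ≤ 3 (u² + v² + w²)` and summing over the rows gives the constant.
-/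

namespace Finset

variable {ι : Type*} (S : Finset ι)

noncomputable def softmax (a : ι → ℝ) (j : ι) : ℝ :=
  Real.exp (a j) / ∑ l ∈ S, Real.exp (a l)

lemma softmax_nonneg (a : ι → ℝ) (j : ι) : 0 ≤ S.softmax a j := by
  unfold softmax; positivity

variable {S}

lemma sum_softmax (hS : S.Nonempty) (a : ι → ℝ) : ∑ j ∈ S, S.softmax a j = 1 := by
  simp only [softmax, ← Finset.sum_div]
  exact div_self (Finset.sum_pos (fun _ _ => Real.exp_pos _) hS).ne'

lemma sum_mul_sub_mean_sq {p r : ι → ℝ} (hp : ∑ j ∈ S, p j = 1) :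
    ∑ j ∈ S, p j * (r j - ∑ l ∈ S, p l * r l) ^ 2
      = ∑ j ∈ S, p j * r j ^ 2 - (∑ l ∈ S, p l * r l) ^ 2 := by
  set m := ∑ l ∈ S, p l * r l
  have hexpand : ∀ j, p j * (r j - m) ^ 2 = p j * r j ^ 2 - 2 * m * (p j * r j) + m ^ 2 * p j :=
    fun j => by ring
  simp only [hexpand, Finset.sum_add_distrib, Finset.sum_sub_distrib, ← Finset.mul_sum, hp]
  ring

lemma abs_sum_mul_mul_sub_mean_le {p w r : ι → ℝ} {M : ℝ} (hp : ∀ j ∈ S, 0 ≤ p j)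
    (hp1 : ∑ j ∈ S, p j = 1) (hw : ∀ j ∈ S, |w j| ≤ 1) (hr : ∀ j ∈ S, |r j| ≤ M) :
    |∑ j ∈ S, w j * (p j * (r j - ∑ l ∈ S, p l * r l))| ≤ M := by
  set m := ∑ l ∈ S, p l * r l
  obtain ⟨j₀, hj₀⟩ : S.Nonempty := Finset.nonempty_of_sum_ne_zero (by rw [hp1]; exact one_ne_zero)
  have hM : 0 ≤ M := (abs_nonneg _).trans (hr j₀ hj₀)
  have hmad : ∑ j ∈ S, p j * |r j - m| ≤ M := by
    have hcs : (∑ j ∈ S, p j * |r j - m|) ^ 2 ≤ (∑ j ∈ S, p j) * ∑ j ∈ S, p j * (r j - m) ^ 2 :=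
      Finset.sum_sq_le_sum_mul_sum_of_sq_le_mul S hp
        (fun j hj => mul_nonneg (hp j hj) (sq_nonneg _))
        (fun j _ => le_of_eq (by rw [mul_pow, sq_abs]; ring))
    have hmoment : ∑ j ∈ S, p j * r j ^ 2 ≤ M ^ 2 := by
      calc ∑ j ∈ S, p j * r j ^ 2 ≤ ∑ j ∈ S, p j * M ^ 2 := by
            refine Finset.sum_le_sum fun j hj => mul_le_mul_of_nonneg_left ?_ (hp j hj)
            exact sq_le_sq' (abs_le.1 (hr j hj)).1 (abs_le.1 (hr j hj)).2
        _ = M ^ 2 := by rw [← Finset.sum_mul, hp1, one_mul]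
    rw [hp1, one_mul, sum_mul_sub_mean_sq hp1] at hcs
    exact (sq_le_sq₀ (Finset.sum_nonneg fun j hj => mul_nonneg (hp j hj) (abs_nonneg _)) hM).1
      (by nlinarith [sq_nonneg m])
  calc |∑ j ∈ S, w j * (p j * (r j - m))|
      ≤ ∑ j ∈ S, |w j * (p j * (r j - m))| := Finset.abs_sum_le_sum_abs _ _
    _ ≤ ∑ j ∈ S, p j * |r j - m| := by
        gcongr with j hj
        rw [abs_mul, abs_mul, abs_of_nonneg (hp j hj)]
        exact mul_le_of_le_one_left (mul_nonneg (hp j hj) (abs_nonneg _)) (hw j hj)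
    _ ≤ M := hmad

lemma hasDerivAt_softmax_add_smul (hS : S.Nonempty) (b r : ι → ℝ) (j : ι) (t : ℝ) :
    HasDerivAt (fun s => S.softmax (b + s • r) j)
      (S.softmax (b + t • r) j * (r j - ∑ l ∈ S, S.softmax (b + t • r) l * r l)) t := by
  have hexp : ∀ l, HasDerivAt (fun s => Real.exp (b l + s * r l))
      (Real.exp (b l + t * r l) * r l) t := fun l =>
    (((hasDerivAt_id t).mul_const (r l)).const_add (b l)).exp.congr_deriv (by simp)
  have hZ : (∑ l ∈ S, Real.exp (b l + t * r l)) ≠ 0 :=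
    (Finset.sum_pos (fun _ _ => Real.exp_pos _) hS).ne'
  have hmean : ∑ l ∈ S, S.softmax (b + t • r) l * r l
      = (∑ l ∈ S, Real.exp (b l + t * r l) * r l) / ∑ l ∈ S, Real.exp (b l + t * r l) := by
    simp only [Finset.sum_div, softmax, Pi.add_apply, Pi.smul_apply, smul_eq_mul,
      div_mul_eq_mul_div]
  refine ((hexp j).div (HasDerivAt.fun_sum fun l _ => hexp l) hZ).congr_deriv ?_
  rw [hmean]
  simp only [softmax, Pi.add_apply, Pi.smul_apply, smul_eq_mul]
  field_simp

/-- Along `t ↦ b + t • (a - b)`, the derivative of `∑ j, w j * softmax j` is the covariance of `w`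
and `a - b` under the softmax weights; with `w` the sign pattern of the endpoint difference, the
mean value theorem bounds the `ℓ¹` distance by `M`. -/
theorem sum_abs_softmax_sub_softmax_le (hS : S.Nonempty) {a b : ι → ℝ} {M : ℝ}
    (hab : ∀ j ∈ S, |a j - b j| ≤ M) :
    ∑ j ∈ S, |S.softmax a j - S.softmax b j| ≤ M := by
  set w : ι → ℝ := fun j => SignType.sign (S.softmax a j - S.softmax b j)
  set φ : ℝ → ℝ := fun s => ∑ j ∈ S, w j * S.softmax (b + s • (a - b)) j
  set p : ℝ → ι → ℝ := fun s => S.softmax (b + s • (a - b))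
  have hφ : ∀ t, HasDerivAt φ
      (∑ j ∈ S, w j * (p t j * ((a - b) j - ∑ l ∈ S, p t l * (a - b) l))) t := fun t =>
    HasDerivAt.fun_sum fun j _ => (hasDerivAt_softmax_add_smul hS b (a - b) j t).const_mul (w j)
  have hsign : ∀ s : SignType, |(s : ℝ)| ≤ 1 := by
    intro s; cases s <;> simp
  have hφ' : ∀ t, ‖∑ j ∈ S, w j * (p t j * ((a - b) j - ∑ l ∈ S, p t l * (a - b) l))‖ ≤ M :=
    fun t => abs_sum_mul_mul_sub_mean_le (fun j _ => softmax_nonneg S _ j) (sum_softmax hS _)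
      (fun j _ => hsign _) hab
  have hmvt := convex_univ.norm_image_sub_le_of_norm_hasDerivWithin_le
    (fun t _ => (hφ t).hasDerivWithinAt) (fun t _ => hφ' t) (Set.mem_univ 0) (Set.mem_univ 1)
  have hφ10 : φ 1 - φ 0 = ∑ j ∈ S, |S.softmax a j - S.softmax b j| := by
    simp only [φ, w, one_smul, zero_smul, add_zero, add_sub_cancel, ← Finset.sum_sub_distrib,
      ← mul_sub, sign_mul_self]
  simpa [hφ10, Real.norm_eq_abs] using (le_abs_self _).trans hmvt

end Finset

lemma norm_sum_smul_sub_sum_smul_le {ι E : Type*} [SeminormedAddCommGroup E] [NormedSpace ℝ E]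
    {S : Finset ι} {p q : ι → ℝ} {x y : ι → E} {R D : ℝ} (hq : ∀ j ∈ S, 0 ≤ q j)
    (hq1 : ∑ j ∈ S, q j = 1) (hx : ∀ j ∈ S, ‖x j‖ ≤ R) (hxy : ∀ j ∈ S, ‖x j - y j‖ ≤ D) :
    ‖∑ j ∈ S, p j • x j - ∑ j ∈ S, q j • y j‖ ≤ (∑ j ∈ S, |p j - q j|) * R + D := by
  have hsplit : ∑ j ∈ S, p j • x j - ∑ j ∈ S, q j • y j
      = ∑ j ∈ S, (p j - q j) • x j + ∑ j ∈ S, q j • (x j - y j) := by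
    rw [← Finset.sum_add_distrib, ← Finset.sum_sub_distrib]
    exact Finset.sum_congr rfl fun j _ => by rw [sub_smul, smul_sub]; abel
  rw [hsplit, Finset.sum_mul]
  refine (norm_add_le _ _).trans (add_le_add ?_ ?_)
  · refine (norm_sum_le _ _).trans (Finset.sum_le_sum fun j hj => ?_)
    rw [norm_smul, Real.norm_eq_abs]
    exact mul_le_mul_of_nonneg_left (hx j hj) (abs_nonneg _)
  · calc ‖∑ j ∈ S, q j • (x j - y j)‖ ≤ ∑ j ∈ S, q j * D :=
          (norm_sum_le _ _).trans <| Finset.sum_le_sum fun j hj => by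
            rw [norm_smul, Real.norm_of_nonneg (hq j hj)]
            exact mul_le_mul_of_nonneg_left (hxy j hj) (hq j hj)
      _ = D := by rw [← Finset.sum_mul, hq1, one_mul]

section Attention

variable {a b n d k : ℕ}

lemma spec_nonneg (M : Matrix (Fin a) (Fin b) ℝ) : 0 ≤ spec M := norm_nonneg _

lemma norm_toEuclideanLin_le (M : Matrix (Fin a) (Fin b) ℝ) (v : EuclideanSpace ℝ (Fin b)) :
    ‖Matrix.toEuclideanLin M v‖ ≤ spec M * ‖v‖ :=
  (LinearMap.toContinuousLinearMap (Matrix.toEuclideanLin M)).le_opNorm v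

lemma abs_dotProduct_transpose_mulVec_le (M : Matrix (Fin a) (Fin b) ℝ)
    (x : EuclideanSpace ℝ (Fin b)) (y : EuclideanSpace ℝ (Fin a)) :
    |x ⬝ᵥ Mᵀ *ᵥ y| ≤ spec M * ‖x‖ * ‖y‖ := by
  have hinner : x ⬝ᵥ Mᵀ *ᵥ y = inner ℝ (Matrix.toEuclideanLin M x) y := by
    rw [EuclideanSpace.inner_eq_star_dotProduct, Matrix.toLpLin_apply, dotProduct_mulVec,
      vecMul_transpose, star_trivial, dotProduct_comm]
  rw [hinner]
  exact (abs_real_inner_le_norm _ _).trans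
    (mul_le_mul_of_nonneg_right (norm_toEuclideanLin_le M x) (norm_nonneg _))

lemma abs_dotProduct_transpose_mulVec_sub_le (M : Matrix (Fin a) (Fin b) ℝ) {R : ℝ}
    {x y : EuclideanSpace ℝ (Fin b)} {x' y' : EuclideanSpace ℝ (Fin a)}
    (hx : ‖x‖ ≤ R) (hy' : ‖y'‖ ≤ R) :
    |x ⬝ᵥ Mᵀ *ᵥ x' - y ⬝ᵥ Mᵀ *ᵥ y'| ≤ spec M * R * (‖x' - y'‖ + ‖x - y‖) := by
  have hsplit : x ⬝ᵥ Mᵀ *ᵥ x' - y ⬝ᵥ Mᵀ *ᵥ y'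
      = x ⬝ᵥ Mᵀ *ᵥ (x' - y') + (x - y) ⬝ᵥ Mᵀ *ᵥ y' := by
    simp only [WithLp.ofLp_sub, mulVec_sub, dotProduct_sub, sub_dotProduct]
    ring
  have h₁ := abs_dotProduct_transpose_mulVec_le M x (x' - y')
  have h₂ := abs_dotProduct_transpose_mulVec_le M (x - y) y'
  have hM := spec_nonneg M
  rw [hsplit]
  refine (abs_add_le _ _).trans ?_
  calc _ ≤ spec M * ‖x‖ * ‖x' - y'‖ + spec M * ‖x - y‖ * ‖y'‖ := add_le_add h₁ h₂
    _ ≤ spec M * R * ‖x' - y'‖ + spec M * ‖x - y‖ * R := by gcongr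
    _ = spec M * R * (‖x' - y'‖ + ‖x - y‖) := by ring

lemma maskedAttnF_apply (A : Matrix (Fin d) (Fin d) ℝ) (V : Matrix (Fin k) (Fin d) ℝ)
    (x : PiLp 2 (fun _ : Fin n => EuclideanSpace ℝ (Fin d))) (i : Fin n) :
    maskedAttnF n d k A V x i = Matrix.toEuclideanLin V
      (∑ j ∈ Finset.Iic i, (Finset.Iic i).softmax (fun j => x i ⬝ᵥ Aᵀ *ᵥ x j) j • x j) := by
  simp only [maskedAttnF, Matrix.toLpLin_apply, WithLp.ofLp_sum, WithLp.ofLp_smul,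
    Finset.softmax, ← Finset.filter_ge_eq_Iic]

lemma norm_maskedAttnF_apply_sub_le (A : Matrix (Fin d) (Fin d) ℝ)
    (V : Matrix (Fin k) (Fin d) ℝ) {R : ℝ}
    {X Y : PiLp 2 (fun _ : Fin n => EuclideanSpace ℝ (Fin d))}
    (hX : ∀ i, ‖X i‖ ≤ R) (hY : ∀ i, ‖Y i‖ ≤ R) (i : Fin n) :
    ‖maskedAttnF n d k A V X i - maskedAttnF n d k A V Y i‖
      ≤ spec V * (spec A * R ^ 2 * (‖X - Y‖ + ‖X i - Y i‖) + ‖X - Y‖) := by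
  have hS : (Finset.Iic i).Nonempty := ⟨i, Finset.mem_Iic.2 le_rfl⟩
  have hR : 0 ≤ R := (norm_nonneg _).trans (hX i)
  have hlogits : ∀ j ∈ Finset.Iic i, |X i ⬝ᵥ Aᵀ *ᵥ X j - Y i ⬝ᵥ Aᵀ *ᵥ Y j|
      ≤ spec A * R * (‖X - Y‖ + ‖X i - Y i‖) := fun j _ =>
    (abs_dotProduct_transpose_mulVec_sub_le A (hX i) (hY j)).trans <| by
      gcongr
      · exact mul_nonneg (spec_nonneg A) hR
      · exact PiLp.norm_apply_le (X - Y) j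
  rw [maskedAttnF_apply, maskedAttnF_apply, ← map_sub]
  refine (norm_toEuclideanLin_le V _).trans (mul_le_mul_of_nonneg_left ?_ (spec_nonneg V))
  refine (norm_sum_smul_sub_sum_smul_le (fun j _ => Finset.softmax_nonneg _ _ j)
    (Finset.sum_softmax hS _) (fun j _ => hX j) (fun j _ => PiLp.norm_apply_le (X - Y) j)).trans ?_
  have hsoft := Finset.sum_abs_softmax_sub_softmax_le hS hlogits
  calc _ ≤ spec A * R * (‖X - Y‖ + ‖X i - Y i‖) * R + ‖X - Y‖ := by gcongr
    _ = _ := by ring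

lemma norm_maskedAttnF_sub_sq_le (A : Matrix (Fin d) (Fin d) ℝ)
    (V : Matrix (Fin k) (Fin d) ℝ) {R : ℝ}
    {X Y : PiLp 2 (fun _ : Fin n => EuclideanSpace ℝ (Fin d))}
    (hX : ∀ i, ‖X i‖ ≤ R) (hY : ∀ i, ‖Y i‖ ≤ R) :
    ‖maskedAttnF n d k A V X - maskedAttnF n d k A V Y‖ ^ 2
      ≤ 3 * spec V ^ 2 * (spec A ^ 2 * R ^ 4 * (n + 1) + n) * ‖X - Y‖ ^ 2 := by
  set C := spec A * R ^ 2
  set D := ‖X - Y‖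
  have hD : ∑ i, ‖X i - Y i‖ ^ 2 = D ^ 2 := (PiLp.norm_sq_eq_of_L2 _ (X - Y)).symm
  have hrow : ∀ i, ‖maskedAttnF n d k A V X i - maskedAttnF n d k A V Y i‖ ^ 2
      ≤ 3 * spec V ^ 2 * (C ^ 2 * ‖X i - Y i‖ ^ 2 + (C ^ 2 * D ^ 2 + D ^ 2)) := fun i => by
    have h3 : ∀ u v w : ℝ, (u + v + w) ^ 2 ≤ 3 * (u ^ 2 + v ^ 2 + w ^ 2) := fun u v w => by
      nlinarith [sq_nonneg (u - v), sq_nonneg (v - w), sq_nonneg (u - w)]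
    calc _ ≤ (spec V * (C * (D + ‖X i - Y i‖) + D)) ^ 2 :=
          pow_le_pow_left₀ (norm_nonneg _) (norm_maskedAttnF_apply_sub_le A V hX hY i) 2
      _ = spec V ^ 2 * (C * D + C * ‖X i - Y i‖ + D) ^ 2 := by ring
      _ ≤ spec V ^ 2 * (3 * ((C * D) ^ 2 + (C * ‖X i - Y i‖) ^ 2 + D ^ 2)) := by
          gcongr; exact h3 _ _ _
      _ = _ := by ring
  calc _ = ∑ i, ‖maskedAttnF n d k A V X i - maskedAttnF n d k A V Y i‖ ^ 2 :=
        PiLp.norm_sq_eq_of_L2 _ _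
    _ ≤ ∑ i, 3 * spec V ^ 2 * (C ^ 2 * ‖X i - Y i‖ ^ 2 + (C ^ 2 * D ^ 2 + D ^ 2)) :=
        Finset.sum_le_sum fun i _ => hrow i
    _ = 3 * spec V ^ 2 * (C ^ 2 * D ^ 2 + n * (C ^ 2 * D ^ 2 + D ^ 2)) := by
        rw [← Finset.mul_sum, Finset.sum_add_distrib, ← Finset.mul_sum, hD, Finset.sum_const,
          Finset.card_univ, Fintype.card_fin, nsmul_eq_mul]
    _ = _ := by ring

end Attention

theorem masked_attn_lipschitz_on_ball_general {n d k : ℕ} (R : ℝ)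
    (A : Matrix (Fin d) (Fin d) ℝ) (V : Matrix (Fin k) (Fin d) ℝ)
    (X Y : PiLp 2 (fun _ : Fin n => EuclideanSpace ℝ (Fin d)))
    (hX : ∀ i, ‖X i‖ ≤ R) (hY : ∀ i, ‖Y i‖ ≤ R) :
    ‖maskedAttnF n d k A V X - maskedAttnF n d k A V Y‖ ≤
      Real.sqrt 3 * spec V *
        Real.sqrt (spec A ^ 2 * R ^ 4 * (n + 1) + n) * ‖X - Y‖ := by
  have hV := spec_nonneg V
  rw [← sq_le_sq₀ (norm_nonneg _) (by positivity), mul_pow, mul_pow, mul_pow,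
    Real.sq_sqrt zero_le_three, Real.sq_sqrt (by positivity)]
  exact norm_maskedAttnF_sub_sq_le A V hX hY

/-- `Lip(f^m|_{B_R^n}) ≤ √3 ‖V‖₂ (‖A‖₂² R⁴ (n + 1) + n)^{1/2}`. -/
theorem masked_attn_lipschitz_on_ball {n d k : ℕ} (R : ℝ) (hR : 0 < R)
    (A : Matrix (Fin d) (Fin d) ℝ) (V : Matrix (Fin k) (Fin d) ℝ)
    (X Y : PiLp 2 (fun _ : Fin n => EuclideanSpace ℝ (Fin d)))
    (hX : ∀ i, ‖X i‖ ≤ R) (hY : ∀ i, ‖Y i‖ ≤ R) :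
    ‖maskedAttnF n d k A V X - maskedAttnF n d k A V Y‖ ≤
      Real.sqrt 3 * spec V *
        Real.sqrt (spec A ^ 2 * R ^ 4 * (n + 1) + n) * ‖X - Y‖ :=
  masked_attn_lipschitz_on_ball_general R A V X Y hX hY
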